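/- arXiv:2303.14852 — 5 statements merged into one kernel-verified Lean document; each statement's English description precedes it below -/
import Mathlib

section
/- Let 0 < j < n and assume that (ch(K), n) ≠ (2,2). Then there exists α ∈ F^0 such that θ^j(α) ≠ α. -/
/-- Let `F/K` be a finite cyclic Galois extension of degree `n` with
`Gal(F/K)` generated by `θ`, and let `F⁰` be the kernel of the trace map.  Let `0 < j < n`
and assume `(ch K, n) ≠ (2,2)`.  Then there exists `α ∈ F⁰` with `θ^j(α) ≠ α`. -/
theorem stmt_11 (K F : Type) [Field K] [Field F] [Algebra K F]
    [FiniteDimensional K F] [IsGalois K F]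
    (n : ℕ) (hn : Module.finrank K F = n)
    (θ : F ≃ₐ[K] F) (hθ : ∀ σ : F ≃ₐ[K] F, σ ∈ Subgroup.zpowers θ)
    (j : ℕ) (hj0 : 0 < j) (hjn : j < n)
    (hch : ¬(ringChar K = 2 ∧ n = 2)) :
    ∃ α : F, Algebra.trace K F α = 0 ∧ (θ ^ j) α ≠ α := by
  by_contra hcon
  push_neg at hcon
  have hcon' : ∀ α : F, Algebra.trace K F α = 0 → (θ ^ j) α = α := fun α h =>
    hcon α h
  classical
  -- order of θ is n
  have hord : orderOf θ = n := by
    rw [orderOf_eq_card_of_forall_mem_zpowers hθ,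
      IsGalois.card_aut_eq_finrank, hn]
  have hθj : θ ^ j ≠ 1 := by
    intro h
    have hd := orderOf_dvd_of_pow_eq_one h
    rw [hord] at hd
    exact absurd (Nat.le_of_dvd hj0 hd) (not_le.mpr hjn)
  -- the fixed field of ⟨θ^j⟩
  set H : Subgroup (F ≃ₐ[K] F) := Subgroup.zpowers (θ ^ j) with hH
  set L : IntermediateField K F := IntermediateField.fixedField H with hL
  -- kernel of the trace is contained in L
  have hle : (LinearMap.ker (Algebra.trace K F) : Submodule K F) ≤
      Subalgebra.toSubmodule L.toSubalgebra := by
    intro x hx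
    have hx0 : Algebra.trace K F x = 0 := hx
    have hfix : (θ ^ j) x = x := hcon' x hx0
    have hst : θ ^ j ∈ MulAction.stabilizer (F ≃ₐ[K] F) x := hfix
    have hsub : H ≤ MulAction.stabilizer (F ≃ₐ[K] F) x :=
      Subgroup.zpowers_le.mpr hst
    exact fun g : H => hsub g.2
  -- rank comparisons
  have hsurj : Function.Surjective (Algebra.trace K F) := Algebra.trace_surjective K F
  have hrk : Module.finrank K (LinearMap.ker (Algebra.trace K F)) = n - 1 := by
    have h1 := LinearMap.finrank_range_add_finrank_ker (Algebra.trace K F)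
    rw [LinearMap.range_eq_top.mpr hsurj, finrank_top, Module.finrank_self, hn] at h1
    omega
  have hmono := Submodule.finrank_mono hle
  rw [hrk] at hmono
  have hLcard : Module.finrank (↥L) F = Fintype.card H := by
    rw [← Nat.card_eq_fintype_card]; exact IntermediateField.finrank_fixedField_eq_card H
  have hHcard : Fintype.card H = orderOf (θ ^ j) := by
    rw [← Nat.card_eq_fintype_card]
    exact Nat.card_zpowers _
  have hm2 : 2 ≤ orderOf (θ ^ j) := by
    have h1 : orderOf (θ ^ j) ≠ 1 := fun h => hθj (orderOf_eq_one_iff.mp h)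
    have h0 : orderOf (θ ^ j) ≠ 0 := by
      have : IsOfFinOrder (θ ^ j) := isOfFinOrder_of_finite _
      exact this.orderOf_pos.ne'
    omega
  have hmul : Module.finrank K (↥L) * Module.finrank (↥L) F = n := by
    rw [Module.finrank_mul_finrank, hn]
  have hdim : Module.finrank K (↥L) =
      Module.finrank K (Subalgebra.toSubmodule L.toSubalgebra) := rfl
  -- conclude n ≤ 2
  have hkey : Module.finrank K (↥L) * 2 ≤ n := by
    calc Module.finrank K (↥L) * 2 ≤ Module.finrank K (↥L) * Module.finrank (↥L) F := by
          rw [hLcard, hHcard]; exact Nat.mul_le_mul_left _ hm2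
      _ = n := hmul
  have hle2 : n - 1 ≤ Module.finrank K (↥L) := by rw [hdim]; exact hmono
  have hn2 : n = 2 := by omega
  have hj1 : j = 1 := by omega
  -- now derive ringChar K = 2, contradiction
  subst hj1
  have hθ2 : θ ^ 2 = 1 := by rw [← hn2, ← hord]; exact pow_orderOf_eq_one θ
  -- trace of x - θ x is zero
  have htr : ∀ x : F, Algebra.trace K F (x - θ x) = 0 := fun x => by
    rw [map_sub, Algebra.trace_eq_of_algEquiv θ x, sub_self]
  have hfix2 : ∀ x : F, θ (x - θ x) = x - θ x := by
    intro x
    have := hcon' (x - θ x) (htr x)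
    simpa using this
  -- θ ≠ 1
  have hθne : θ ≠ 1 := by
    intro h
    rw [h, orderOf_one] at hord
    omega
  obtain ⟨x, hx⟩ : ∃ x : F, θ x ≠ x := by
    by_contra h
    push_neg at h
    exact hθne (AlgEquiv.ext h)
  have h2 : (2 : F) * (x - θ x) = 0 := by
    have h1 := hfix2 x
    have hθθ : θ (θ x) = x := by
      have := congrFun (congrArg DFunLike.coe hθ2) x
      simpa [pow_two] using this
    rw [map_sub, hθθ] at h1
    ring_nf
    ring_nf at h1
    linear_combination -h1
  have hxne : x - θ x ≠ 0 := sub_ne_zero.mpr (Ne.symm hx)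
  have h2F : (2 : F) = 0 := by
    rcases mul_eq_zero.mp h2 with h | h
    · exact h
    · exact absurd h hxne
  have h2K : (2 : K) = 0 := by
    apply FaithfulSMul.algebraMap_injective K F
    rw [map_ofNat, map_zero]
    exact h2F
  have hchar : ringChar K = 2 := by
    have hdvd : ringChar K ∣ 2 := ringChar.dvd (by exact_mod_cast h2K)
    exact ((Nat.dvd_prime Nat.prime_two).mp hdvd).resolve_left CharP.ringChar_ne_one
  exact hch ⟨hchar, hn2⟩
end

section
/- Let α ∈ F with α ≠ 0. Then {α·θ(β) − β·θ^{-1}(α) : β ∈ F} = F^0. -/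
/-- Additive Hilbert 90 (dimension-count version): the image of `θ - 1` equals
the kernel of the trace, when `θ` generates the Galois group. -/
theorem add_hilbert90 (K F : Type) [Field K] [Field F] [Algebra K F]
    [FiniteDimensional K F] [IsGalois K F]
    (θ : F ≃ₐ[K] F) (hθ : ∀ σ : F ≃ₐ[K] F, σ ∈ Subgroup.zpowers θ) :
    LinearMap.range (θ.toLinearMap - LinearMap.id : F →ₗ[K] F)
      = LinearMap.ker (Algebra.trace K F) := by
  set L : F →ₗ[K] F := θ.toLinearMap - LinearMap.id with hL
  have htrθ : ∀ x : F, Algebra.trace K F (θ x) = Algebra.trace K F x := by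
    intro x
    apply (algebraMap K F).injective
    rw [trace_eq_sum_automorphisms, trace_eq_sum_automorphisms]
    exact Fintype.sum_equiv (Equiv.mulRight θ) _ _ (fun σ => rfl)
  -- the range is contained in the trace kernel
  have hle : LinearMap.range L ≤ LinearMap.ker (Algebra.trace K F) := by
    rintro x ⟨y, rfl⟩
    simp [hL, htrθ y]
  -- kernel of L is the image of K
  have hker : LinearMap.ker L = LinearMap.range (Algebra.linearMap K F) := by
    ext x
    constructor
    · intro hx
      have hfix : ∀ σ : F ≃ₐ[K] F, σ x = x := by
        intro σ
        have hx' : θ x = x := by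
          have := hx
          simp only [hL, LinearMap.mem_ker, LinearMap.sub_apply, LinearMap.id_apply,
            AlgEquiv.toLinearMap_apply, sub_eq_zero] at this
          exact this
        have hmem : θ ∈ MulAction.stabilizer (F ≃ₐ[K] F) x := hx'
        have : σ ∈ MulAction.stabilizer (F ≃ₐ[K] F) x := by
          have hz := hθ σ
          exact (Subgroup.zpowers_le.mpr hmem) hz
        exact this
      have hbot : x ∈ (⊥ : IntermediateField K F) := by
        have := IsGalois.fixedField_fixingSubgroup (⊥ : IntermediateField K F)
        rw [IntermediateField.fixingSubgroup_bot] at this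
        rw [← this]
        intro σ
        exact hfix σ.1
      rw [IntermediateField.mem_bot] at hbot
      obtain ⟨k, hk⟩ := hbot
      exact ⟨k, hk⟩
    · rintro ⟨k, rfl⟩
      simp [hL, sub_eq_zero]
  -- dimension count
  have hfr1 : Module.finrank K (LinearMap.ker L) = 1 := by
    rw [hker]
    rw [LinearMap.finrank_range_of_inj (by
      intro a b hab
      exact (algebraMap K F).injective hab)]
    exact Module.finrank_self K
  have htrace_surj : Function.Surjective (Algebra.trace K F) :=
    Algebra.trace_surjective K F
  have hfr2 : Module.finrank K (LinearMap.ker (Algebra.trace K F))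
      = Module.finrank K F - 1 := by
    have h := LinearMap.finrank_range_add_finrank_ker (Algebra.trace K F)
    have hrange : LinearMap.range (Algebra.trace K F) = ⊤ :=
      LinearMap.range_eq_top.mpr htrace_surj
    rw [hrange, finrank_top, Module.finrank_self] at h
    omega
  have hfr3 : Module.finrank K (LinearMap.range L) = Module.finrank K F - 1 := by
    have h := LinearMap.finrank_range_add_finrank_ker L
    rw [hfr1] at h
    omega
  exact Submodule.eq_of_le_of_finrank_eq hle (by rw [hfr3, hfr2])

/-- Let `F/K` be a finite cyclic Galois extension of degree `n` with
`Gal(F/K)` generated by `θ`, and let `F⁰` be the kernel of the trace map `T : F → K`.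
Let `α ∈ F`, `α ≠ 0`.  Then `{α·θ(β) - β·θ⁻¹(α) : β ∈ F} = F⁰`. -/
theorem stmt_12 (K F : Type) [Field K] [Field F] [Algebra K F]
    [FiniteDimensional K F] [IsGalois K F]
    (n : ℕ) (hn : Module.finrank K F = n)
    (θ : F ≃ₐ[K] F) (hθ : ∀ σ : F ≃ₐ[K] F, σ ∈ Subgroup.zpowers θ)
    (α : F) (hα : α ≠ 0) :
    {x : F | ∃ β : F, x = α * θ β - β * θ⁻¹ α} = {x : F | Algebra.trace K F x = 0} := by
  have h90 := add_hilbert90 K F θ hθ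
  set γ : F := θ⁻¹ α with hγdef
  have hθγ : θ γ = α := by
    rw [hγdef]
    exact congrFun (congrArg DFunLike.coe (mul_inv_cancel θ)) α
  have hγ : γ ≠ 0 := fun h => hα (by rw [← hθγ, h, map_zero])
  ext x
  simp only [Set.mem_setOf_eq]
  constructor
  · rintro ⟨β, rfl⟩
    have : α * θ β - β * γ = θ (γ * β) - γ * β := by
      rw [map_mul, hθγ]; ring
    have hx : α * θ β - β * γ ∈ LinearMap.range (θ.toLinearMap - LinearMap.id : F →ₗ[K] F) := by
      refine ⟨γ * β, ?_⟩
      simp [this]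
    rw [h90] at hx
    exact hx
  · intro hx
    have hx' : x ∈ LinearMap.ker (Algebra.trace K F) := hx
    rw [← h90] at hx'
    obtain ⟨y, hy⟩ := hx'
    refine ⟨y / γ, ?_⟩
    have hθy : θ (y / γ) = θ y / α := by rw [map_div₀, hθγ]
    have hαne : α ≠ 0 := hα
    have hy' : θ y - y = x := by
      simpa [sub_eq_iff_eq_add] using hy
    rw [hθy, div_mul_cancel₀ _ hγ, mul_div_cancel₀ _ hαne, ← hy']
end

section
/- Let k be an integer such that k+1 is not congruent to 0 modulo n. Then the K-linear span of the set {α·θ(β) − β·θ^k(α) : α, β ∈ F} equals F. -/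
/-- Let `F/K` be a finite cyclic Galois extension of degree `n` with
`Gal(F/K)` generated by `θ`.  Let `k` be an integer with `k + 1 ≢ 0 (mod n)`.  Then the
`K`-linear span of `{α·θ(β) - β·θ^k(α) : α, β ∈ F}` is all of `F`. -/
theorem stmt_13 (K F : Type) [Field K] [Field F] [Algebra K F]
    [FiniteDimensional K F] [IsGalois K F]
    (n : ℕ) (hn : Module.finrank K F = n)
    (θ : F ≃ₐ[K] F) (hθ : ∀ σ : F ≃ₐ[K] F, σ ∈ Subgroup.zpowers θ)
    (k : ℤ) (hk : ¬ ((n : ℤ) ∣ (k + 1))) :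
    Submodule.span K {x : F | ∃ α β : F, x = α * θ β - β * (θ ^ k) α} = ⊤ := by
  by_contra hne
  obtain ⟨f, hf0, hfmap⟩ :=
    Submodule.exists_dual_map_eq_bot_of_lt_top (lt_top_iff_ne_top.mpr hne) inferInstance
  have hnd := traceForm_nondegenerate K F
  set e := (Algebra.traceForm K F).toDual hnd with he
  set c : F := e.symm f with hc
  have hec : e c = f := e.apply_symm_apply f
  have hc0 : c ≠ 0 := by
    intro h
    apply hf0
    rw [h, map_zero] at hec
    exact hec.symm
  -- f vanishes on the set
  have hker : ∀ α β : F, Algebra.trace K F (c * (α * θ β - β * (θ ^ k) α)) = 0 := by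
    intro α β
    have hmem : (α * θ β - β * (θ ^ k) α) ∈
        Submodule.span K {x : F | ∃ α β : F, x = α * θ β - β * (θ ^ k) α} :=
      Submodule.subset_span ⟨α, β, rfl⟩
    have h := Submodule.mem_map_of_mem (f := f) hmem
    rw [hfmap, Submodule.mem_bot] at h
    have hfc : f (α * θ β - β * (θ ^ k) α) =
        Algebra.trace K F (c * (α * θ β - β * (θ ^ k) α)) := by
      rw [← hec]; rfl
    rw [hfc] at h
    exact h
  -- trace invariance under θ^k
  have htr : ∀ y : F, Algebra.trace K F ((θ ^ k) y) = Algebra.trace K F y := fun y =>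
    Algebra.trace_eq_of_algEquiv (θ ^ k) y
  have hinv : ∀ y : F, (θ ^ k) ((θ ^ (-k)) y) = y := by
    intro y
    rw [← AlgEquiv.mul_apply, ← zpow_add, add_neg_cancel, zpow_zero, AlgEquiv.one_apply]
  -- key: c * θ β = θ^{-k} (c * β) for all β
  have hkey : ∀ β : F, c * θ β = (θ ^ (-k)) (c * β) := by
    intro β
    have hsep : ∀ α : F,
        Algebra.traceForm K F (c * θ β - (θ ^ (-k)) (c * β)) α = 0 := by
      intro α
      rw [Algebra.traceForm_apply, sub_mul, map_sub]
      have e1 : c * θ β * α = c * (α * θ β) := by ring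
      have e2 : Algebra.trace K F ((θ ^ (-k)) (c * β) * α) =
          Algebra.trace K F (c * (β * (θ ^ k) α)) := by
        have h2 : c * (β * (θ ^ k) α) = (θ ^ k) ((θ ^ (-k)) (c * β) * α) := by
          rw [map_mul, hinv]; ring
        rw [h2, htr]
      rw [e1, e2, ← map_sub, ← mul_sub, hker α β]
    exact sub_eq_zero.mp (hnd.1 _ hsep)
  -- β = 1 gives θ^{-k} c = c
  have hc1 : (θ ^ (-k)) c = c := by
    have := hkey 1
    rw [map_one, mul_one] at this
    exact this.symm
  -- hence θ β = θ^{-k} β for all β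
  have hθeq : ∀ β : F, θ β = (θ ^ (-k)) β := by
    intro β
    have := hkey β
    rw [map_mul, hc1] at this
    exact mul_left_cancel₀ hc0 this
  -- so θ^(k+1) = 1
  have hpow : θ ^ (k + 1) = 1 := by
    ext β
    have : (θ ^ (k + 1)) β = (θ ^ k) (θ β) := by
      rw [zpow_add, zpow_one, AlgEquiv.mul_apply]
    rw [this, hθeq β, hinv]
    rfl
  -- order of θ is n
  have hord : orderOf θ = n := by
    rw [orderOf_eq_card_of_forall_mem_zpowers hθ, IsGalois.card_aut_eq_finrank, hn]
  exact hk (by rw [← hord]; exact orderOf_dvd_iff_zpow_eq_one.mpr hpow)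
end

section
/- Let R be a principal ideal domain with field of fractions F, let L be an R-Lie lattice, and let 𝓛 = L ⊗_R F be the associated F-Lie algebra. Then the following are equivalent: (1) L is just infinite; (2) 𝓛 is nonzero and has no nonzero proper Lie ideals; (3) L is hereditarily just infinite. -/
open scoped TensorProduct

/-- An `R`-Lie lattice (finitely generated free `R`-module with an `R`-Lie algebra
structure) is *just infinite* if it is nonzero and every nonzero Lie ideal has full rank. -/
def LieJustInfinite (R : Type) [CommRing R] (L : Type) [LieRing L] [LieAlgebra R L] : Prop :=
  Nontrivial L ∧ ∀ I : LieIdeal R L, I ≠ ⊥ →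
    Module.finrank R I.toSubmodule = Module.finrank R L

section StmtAux

set_option linter.unusedSectionVars false

variable (R : Type) [CommRing R] [IsDomain R] [IsPrincipalIdealRing R]
    (L : Type) [LieRing L] [LieAlgebra R L] [Module.Free R L] [Module.Finite R L]

theorem stmt14_loc :
    IsLocalizedModule (nonZeroDivisors R) (TensorProduct.mk R (FractionRing R) L 1) :=
  (isLocalizedModule_iff_isBaseChange (nonZeroDivisors R) (FractionRing R) _).mpr
    (TensorProduct.isBaseChange R L (FractionRing R))

theorem stmt14_inj : Function.Injective (TensorProduct.mk R (FractionRing R) L 1) := by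
  have := stmt14_loc R L
  rw [← LinearMap.ker_eq_bot, eq_bot_iff]
  intro x hx
  obtain ⟨s, hs⟩ := (IsLocalizedModule.eq_zero_iff (nonZeroDivisors R) _).mp hx
  have hsx : (s : R) • x = 0 := hs
  rcases smul_eq_zero.mp hsx with h | h
  · exact absurd h (nonZeroDivisors.ne_zero s.2)
  · simpa using h

theorem stmt14_range (p : Submodule R L) :
    LinearMap.range (p.subtype.baseChange (FractionRing R)) = p.baseChange (FractionRing R) := by
  apply le_antisymm
  · rintro - ⟨x, rfl⟩
    induction x using TensorProduct.induction_on with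
    | zero => simp
    | tmul a m => rw [LinearMap.baseChange_tmul]; exact Submodule.tmul_mem_baseChange_of_mem a m.2
    | add x y hx hy => rw [map_add]; exact Submodule.add_mem _ hx hy
  · rw [Submodule.baseChange_eq_span, Submodule.span_le]
    rintro - ⟨m, hm, rfl⟩
    exact ⟨(1 : FractionRing R) ⊗ₜ (⟨m, hm⟩ : p), by simp⟩

theorem stmt14_finrank (p : Submodule R L) :
    Module.finrank (FractionRing R) (p.baseChange (FractionRing R)) = Module.finrank R p := by
  have hflat : Module.Flat R (FractionRing R) := IsLocalization.flat _ (nonZeroDivisors R)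
  have hinj : Function.Injective (p.subtype.baseChange (FractionRing R)) := by
    have h := Module.Flat.lTensor_preserves_injective_linearMap (M := FractionRing R)
      p.subtype p.injective_subtype
    rwa [← LinearMap.baseChange_eq_ltensor] at h
  rw [← stmt14_range]
  rw [← LinearEquiv.finrank_eq (LinearEquiv.ofInjective _ hinj), Module.finrank_baseChange]

/-- The `F`-span in `F ⊗ L` of a submodule `T` which is stable under bracketing with a
full (after base change) submodule `S` is a Lie ideal of `F ⊗ L`. -/
noncomputable def stmt14Ideal (S T : Submodule R L)
    (hST : S.baseChange (FractionRing R) = ⊤)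
    (h : ∀ s ∈ S, ∀ t ∈ T, ⁅s, t⁆ ∈ T) :
    LieIdeal (FractionRing R) (FractionRing R ⊗[R] L) :=
  { T.baseChange (FractionRing R) with
    lie_mem := by
      intro x m hm
      simp only [AddSubsemigroup.mem_carrier, AddSubmonoid.mem_toSubsemigroup,
        Submodule.mem_toAddSubmonoid] at hm ⊢
      have hx : x ∈ Submodule.span (FractionRing R)
          (S.map (TensorProduct.mk R (FractionRing R) L 1)) := by
        rw [← Submodule.baseChange_eq_span, hST]; trivial
      apply Submodule.span_induction
        (p := fun x' _ ↦ ⁅x', m⁆ ∈ T.baseChange (FractionRing R)) (hx := hx)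
      · rintro - ⟨s, hs, rfl⟩
        have hm' : m ∈ Submodule.span (FractionRing R)
            (T.map (TensorProduct.mk R (FractionRing R) L 1)) := by rwa [← Submodule.baseChange_eq_span]
        apply Submodule.span_induction
          (p := fun y' _ ↦ ⁅TensorProduct.mk R (FractionRing R) L 1 s, y'⁆
            ∈ T.baseChange (FractionRing R)) (hx := hm')
        · rintro - ⟨t, ht, rfl⟩
          have hb : ⁅TensorProduct.mk R (FractionRing R) L 1 s,
              TensorProduct.mk R (FractionRing R) L 1 t⁆
              = (1 : FractionRing R) ⊗ₜ[R] ⁅s, t⁆ := by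
            show ((1 : FractionRing R) * 1) ⊗ₜ[R] ⁅s, t⁆ = (1 : FractionRing R) ⊗ₜ[R] ⁅s, t⁆
            rw [mul_one]
          rw [hb]
          exact Submodule.tmul_mem_baseChange_of_mem _ (h s hs t ht)
        · have hz : ⁅TensorProduct.mk R (FractionRing R) L 1 s,
              (0 : FractionRing R ⊗[R] L)⁆ = 0 :=
            lie_zero (M := FractionRing R ⊗[R] L) (TensorProduct.mk R (FractionRing R) L 1 s)
          rw [hz]; exact Submodule.zero_mem _
        · intro u v _ _ hu hv
          have ha : ⁅TensorProduct.mk R (FractionRing R) L 1 s, u + v⁆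
              = ⁅TensorProduct.mk R (FractionRing R) L 1 s, u⁆
                + ⁅TensorProduct.mk R (FractionRing R) L 1 s, v⁆ :=
            lie_add (TensorProduct.mk R (FractionRing R) L 1 s) u v
          rw [ha]; exact Submodule.add_mem _ hu hv
        · intro a u _ hu
          have ha : ⁅TensorProduct.mk R (FractionRing R) L 1 s, a • u⁆
              = a • ⁅TensorProduct.mk R (FractionRing R) L 1 s, u⁆ :=
            lie_smul a (TensorProduct.mk R (FractionRing R) L 1 s) u
          rw [ha]; exact Submodule.smul_mem _ a hu
      · have hz : ⁅(0 : FractionRing R ⊗[R] L), m⁆ = 0 := zero_lie m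
        rw [hz]; exact Submodule.zero_mem _
      · intro u v _ _ hu hv
        have ha : ⁅u + v, m⁆ = ⁅u, m⁆ + ⁅v, m⁆ := add_lie u v m
        rw [ha]; exact Submodule.add_mem _ hu hv
      · intro a u _ hu
        have ha : ⁅a • u, m⁆ = a • ⁅u, m⁆ := smul_lie a u m
        rw [ha]; exact Submodule.smul_mem _ a hu }

theorem stmt14Ideal_coe (S T : Submodule R L) (hST) (h) :
    LieSubmodule.toSubmodule (stmt14Ideal R L S T hST h) = T.baseChange (FractionRing R) := rfl

/-- Key direction: statement (1) implies statement (2). -/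
theorem stmt14_12 (h1 : LieJustInfinite R L) :
    Nontrivial (FractionRing R ⊗[R] L) ∧
      ∀ I : LieIdeal (FractionRing R) (FractionRing R ⊗[R] L), I = ⊥ ∨ I = ⊤ := by
  obtain ⟨hnt, hid⟩ := h1
  have h0 : 0 < Module.finrank R L := Module.finrank_pos
  have hF0 : 0 < Module.finrank (FractionRing R) (FractionRing R ⊗[R] L) := by
    rw [Module.finrank_baseChange]; exact h0
  refine ⟨Module.finrank_pos_iff.mp hF0, ?_⟩
  intro J
  by_cases hJ : J = ⊥
  · exact Or.inl hJ
  right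
  haveI := stmt14_loc R L
  -- the contraction of `J` to `L`
  let I : LieIdeal R L :=
    { Submodule.comap (TensorProduct.mk R (FractionRing R) L 1)
        (Submodule.restrictScalars R (LieSubmodule.toSubmodule J)) with
      lie_mem := by
        intro x y hy
        simp only [AddSubsemigroup.mem_carrier, AddSubmonoid.mem_toSubsemigroup,
          Submodule.mem_toAddSubmonoid, Submodule.mem_comap,
          Submodule.restrictScalars_mem] at hy ⊢
        have hb : ⁅TensorProduct.mk R (FractionRing R) L 1 x,
            TensorProduct.mk R (FractionRing R) L 1 y⁆
            = TensorProduct.mk R (FractionRing R) L 1 ⁅x, y⁆ := by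
          show ((1 : FractionRing R) * 1) ⊗ₜ[R] ⁅x, y⁆ = (1 : FractionRing R) ⊗ₜ[R] ⁅x, y⁆
          rw [mul_one]
        have := J.lie_mem (x := TensorProduct.mk R (FractionRing R) L 1 x) hy
        rwa [hb] at this }
  have hIc : LieSubmodule.toSubmodule I =
      Submodule.comap (TensorProduct.mk R (FractionRing R) L 1)
        (Submodule.restrictScalars R (LieSubmodule.toSubmodule J)) := rfl
  have hJI : LieSubmodule.toSubmodule J =
      (LieSubmodule.toSubmodule I).baseChange (FractionRing R) := by
    apply le_antisymm
    · intro t ht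
      obtain ⟨⟨x, s⟩, hs⟩ :=
        IsLocalizedModule.surj (nonZeroDivisors R) (TensorProduct.mk R (FractionRing R) L 1) t
      have hs' : (s : R) • t = TensorProduct.mk R (FractionRing R) L 1 x := hs
      have hxI : x ∈ LieSubmodule.toSubmodule I := by
        show TensorProduct.mk R (FractionRing R) L 1 x ∈ LieSubmodule.toSubmodule J
        rw [← hs']
        have hsm : (s : R) • t = (algebraMap R (FractionRing R) (s : R)) • t :=
          (algebraMap_smul (FractionRing R) (s : R) t).symm
        rw [hsm]
        exact Submodule.smul_mem _ _ ht
      have hs0 : algebraMap R (FractionRing R) (s : R) ≠ 0 := by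
        intro hc
        exact nonZeroDivisors.ne_zero s.2
          ((IsFractionRing.to_map_eq_zero_iff (K := FractionRing R)).mp hc)
      have ht' : t = (algebraMap R (FractionRing R) (s : R))⁻¹ •
          ((algebraMap R (FractionRing R) (s : R)) • t) := (inv_smul_smul₀ hs0 t).symm
      rw [ht']
      refine Submodule.smul_mem _ _ ?_
      rw [algebraMap_smul, hs']
      exact Submodule.tmul_mem_baseChange_of_mem 1 hxI
    · rw [Submodule.baseChange_eq_span, Submodule.span_le]
      rintro - ⟨y, hy, rfl⟩
      exact hy
  have hIbot : I ≠ ⊥ := by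
    intro hc
    apply hJ
    have : LieSubmodule.toSubmodule J = ⊥ := by
      rw [hJI, hc, LieSubmodule.bot_toSubmodule, Submodule.baseChange_bot]
    rw [← LieSubmodule.toSubmodule_inj, this, LieSubmodule.bot_toSubmodule]
  have hfr := hid I hIbot
  have hfull : Module.finrank (FractionRing R) (LieSubmodule.toSubmodule J)
      = Module.finrank (FractionRing R) (FractionRing R ⊗[R] L) := by
    rw [hJI, stmt14_finrank, hfr, Module.finrank_baseChange]
  have htop : LieSubmodule.toSubmodule J = ⊤ := Submodule.eq_top_of_finrank_eq hfull
  rw [← LieSubmodule.toSubmodule_inj, htop, LieSubmodule.top_toSubmodule]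


theorem stmt14_21
    (h2 : Nontrivial (FractionRing R ⊗[R] L) ∧
      ∀ I : LieIdeal (FractionRing R) (FractionRing R ⊗[R] L), I = ⊥ ∨ I = ⊤) :
    LieJustInfinite R L := by
  obtain ⟨hnt, hid⟩ := h2
  have hF0 : 0 < Module.finrank (FractionRing R) (FractionRing R ⊗[R] L) :=
    Module.finrank_pos
  have h0 : 0 < Module.finrank R L := by
    rwa [Module.finrank_baseChange] at hF0
  refine ⟨Module.finrank_pos_iff.mp h0, ?_⟩
  intro I hIne
  have hIsub : LieSubmodule.toSubmodule I ≠ ⊥ := by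
    intro hc
    exact hIne ((LieSubmodule.toSubmodule_inj _ _).mp
      (by rw [hc, LieSubmodule.bot_toSubmodule]))
  obtain ⟨x, hx, hx0⟩ := Submodule.exists_mem_ne_zero_of_ne_bot hIsub
  have hJne : I.baseChange (FractionRing R) ≠ ⊥ := by
    intro hc
    have hmem : (1 : FractionRing R) ⊗ₜ[R] x ∈ I.baseChange (FractionRing R) :=
      LieSubmodule.tmul_mem_baseChange_of_mem 1 hx
    rw [hc] at hmem
    have hz : TensorProduct.mk R (FractionRing R) L 1 x = 0 := by simpa using hmem
    exact hx0 ((map_eq_zero_iff _ (stmt14_inj R L)).mp hz)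
  rcases hid (I.baseChange (FractionRing R)) with h | h
  · exact absurd h hJne
  · have htop : (LieSubmodule.toSubmodule I).baseChange (FractionRing R) = ⊤ := by
      rw [← LieSubmodule.coe_baseChange, h, LieSubmodule.top_toSubmodule]
    have hfin := stmt14_finrank R L (LieSubmodule.toSubmodule I)
    rw [htop, finrank_top, Module.finrank_baseChange] at hfin
    exact hfin.symm

theorem stmt14_13 (h1 : LieJustInfinite R L) (M : LieSubalgebra R L)
    (hM : Module.finrank R M.toSubmodule = Module.finrank R L) : LieJustInfinite R ↥M := by
  obtain ⟨hnt2, hid2⟩ := stmt14_12 R L h1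
  haveI := h1.1
  have h0 : 0 < Module.finrank R L := Module.finrank_pos
  have hMnt : Nontrivial M.toSubmodule := Module.finrank_pos_iff.mp (hM ▸ h0)
  refine ⟨hMnt, ?_⟩
  intro I hIne
  let p : Submodule R L := Submodule.map M.toSubmodule.subtype (LieSubmodule.toSubmodule I)
  have hfr : Module.finrank R p = Module.finrank R (LieSubmodule.toSubmodule I) :=
    Submodule.finrank_map_subtype_eq M.toSubmodule (LieSubmodule.toSubmodule I)
  have hMtop : (M.toSubmodule).baseChange (FractionRing R) = ⊤ := by
    apply Submodule.eq_top_of_finrank_eq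
    rw [stmt14_finrank, hM, Module.finrank_baseChange]
  have hbr : ∀ s ∈ M.toSubmodule, ∀ t ∈ p, ⁅s, t⁆ ∈ p := by
    rintro s hs - ⟨i, hi, rfl⟩
    exact ⟨⁅(⟨s, hs⟩ : ↥M), i⁆, I.lie_mem hi, rfl⟩
  have hIsub : LieSubmodule.toSubmodule I ≠ ⊥ := by
    intro hc
    exact hIne ((LieSubmodule.toSubmodule_inj _ _).mp
      (by rw [hc, LieSubmodule.bot_toSubmodule]))
  obtain ⟨y, hy, hy0⟩ := Submodule.exists_mem_ne_zero_of_ne_bot hIsub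
  have hJne : stmt14Ideal R L M.toSubmodule p hMtop hbr ≠ ⊥ := by
    intro hc
    have hmem : (1 : FractionRing R) ⊗ₜ[R] (y : L) ∈
        LieSubmodule.toSubmodule (stmt14Ideal R L M.toSubmodule p hMtop hbr) := by
      rw [stmt14Ideal_coe]
      exact Submodule.tmul_mem_baseChange_of_mem 1 ⟨y, hy, rfl⟩
    rw [hc, LieSubmodule.bot_toSubmodule] at hmem
    have hz : TensorProduct.mk R (FractionRing R) L 1 (y : L) = 0 := by simpa using hmem
    have hyz : (y : L) = 0 := (map_eq_zero_iff _ (stmt14_inj R L)).mp hz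
    exact hy0 (by exact_mod_cast hyz)
  rcases hid2 (stmt14Ideal R L M.toSubmodule p hMtop hbr) with h | h
  · exact absurd h hJne
  · have htop : p.baseChange (FractionRing R) = ⊤ := by
      rw [← stmt14Ideal_coe R L M.toSubmodule p hMtop hbr, h, LieSubmodule.top_toSubmodule]
    have hfin := stmt14_finrank R L p
    rw [htop, finrank_top, Module.finrank_baseChange] at hfin
    have hMM : Module.finrank R ↥M = Module.finrank R M.toSubmodule := rfl
    omega

theorem stmt14_31
    (h3 : ∀ M : LieSubalgebra R L,
      Module.finrank R M.toSubmodule = Module.finrank R L → LieJustInfinite R ↥M) :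
    LieJustInfinite R L := by
  have hT := h3 ⊤ (by
    have h : (⊤ : LieSubalgebra R L).toSubmodule = ⊤ := rfl
    rw [h, finrank_top])
  obtain ⟨hnt, hid⟩ := hT
  constructor
  · exact Equiv.nontrivial (LieSubalgebra.topEquiv (R := R) (L := L)).toLinearEquiv.toEquiv.symm
  · intro I hIne
    have hIsub : LieSubmodule.toSubmodule I ≠ ⊥ := by
      intro hc
      exact hIne ((LieSubmodule.toSubmodule_inj _ _).mp
        (by rw [hc, LieSubmodule.bot_toSubmodule]))
    obtain ⟨x, hx, hx0⟩ := Submodule.exists_mem_ne_zero_of_ne_bot hIsub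
    let I₀ : LieIdeal R ↥(⊤ : LieSubalgebra R L) := LieIdeal.comap (LieSubalgebra.topEquiv (R := R) (L := L)).toLieHom I
    have hc : LieSubmodule.toSubmodule I₀ =
        Submodule.comap ((LieSubalgebra.topEquiv (R := R) (L := L)).toLinearEquiv :
          ↥(⊤ : LieSubalgebra R L) →ₗ[R] L)
          (LieSubmodule.toSubmodule I) := rfl
    have hne : I₀ ≠ ⊥ := by
      intro hcon
      have hmem : (⟨x, trivial⟩ : ↥(⊤ : LieSubalgebra R L)) ∈ I₀ := by
        show (LieSubalgebra.topEquiv (R := R) (L := L)).toLieHom ⟨x, trivial⟩ ∈ I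
        exact hx
      rw [hcon] at hmem
      have hz : (⟨x, trivial⟩ : ↥(⊤ : LieSubalgebra R L)) = 0 := by simpa using hmem
      exact hx0 (by simpa using congrArg Subtype.val hz)
    have hfr := hid I₀ hne
    rw [hc, Submodule.comap_equiv_eq_map_symm, LinearEquiv.finrank_map_eq] at hfr
    rw [hfr]
    exact (LieSubalgebra.topEquiv (R := R) (L := L)).toLinearEquiv.finrank_eq

end StmtAux

theorem stmt_14 (R : Type) [CommRing R] [IsDomain R] [IsPrincipalIdealRing R]
    (L : Type) [LieRing L] [LieAlgebra R L] [Module.Free R L] [Module.Finite R L] :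
    (LieJustInfinite R L ↔
      (Nontrivial (FractionRing R ⊗[R] L) ∧
        ∀ I : LieIdeal (FractionRing R) (FractionRing R ⊗[R] L), I = ⊥ ∨ I = ⊤)) ∧
    (LieJustInfinite R L ↔
      (∀ M : LieSubalgebra R L,
        Module.finrank R M.toSubmodule = Module.finrank R L → LieJustInfinite R ↥M)) := by
  exact ⟨⟨stmt14_12 R L, stmt14_21 R L⟩,
    ⟨fun h1 M hM => stmt14_13 R L h1 M hM, fun h3 => stmt14_31 R L h3⟩⟩
end

section
/- Let L be a just-infinite ℤ_p-Lie lattice with dim_{ℤ_p}(L) ≥ 2, and let k ∈ ℕ. Assume that every ℤ_p-submodule M of L of index p^k satisfies [M,M] = [L,L] (where [M,M] is the set of finite sums of brackets of elements of M). Then for every m ∈ ℕ, the ℤ_p-Lie lattice p^m·L is not self-similar of index p^k. -/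
/-!
Write `D(M)` for the span of the brackets of elements of `M`, and `c = p ^ m`. A subalgebra
`M ≤ c • L` of index `p ^ k` in `c • L` is `c • M'` with `M'` of index `p ^ k` in `L`, so
`D(M) = c² • D(M') = c² • D(L) = D(c • L)`. Hence `D(M)` is an ideal of `c • L`; it is contained
in `M`, it is nonzero because a just-infinite lattice of rank `≥ 2` is not abelian, and every
virtual endomorphism `φ : M → c • L` maps it into `D(c • L) = D(M)`. So no such `φ` is simple.
-/

variable {R L : Type*} [CommRing R] [LieRing L] [LieAlgebra R L]

namespace Submodule

def bracketSpan (M : Submodule R L) : Submodule R L :=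
  span R {z | ∃ x ∈ M, ∃ y ∈ M, z = ⁅x, y⁆}

theorem lie_mem_bracketSpan {M : Submodule R L} {x y : L} (hx : x ∈ M) (hy : y ∈ M) :
    ⁅x, y⁆ ∈ M.bracketSpan :=
  subset_span ⟨x, hx, y, hy, rfl⟩

theorem bracketSpan_top :
    (⊤ : Submodule R L).bracketSpan = span R {z : L | ∃ x y : L, z = ⁅x, y⁆} := by
  simp [bracketSpan]

theorem bracketSpan_le {M : Submodule R L} (hM : ∀ x ∈ M, ∀ y ∈ M, ⁅x, y⁆ ∈ M) :
    M.bracketSpan ≤ M :=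
  span_le.2 fun _ ⟨x, hx, y, hy, hz⟩ => hz ▸ hM x hx y hy

theorem bracketSpan_map_smul (c : R) (M : Submodule R L) :
    (M.map (c • LinearMap.id)).bracketSpan = M.bracketSpan.map ((c * c) • LinearMap.id) := by
  rw [bracketSpan, bracketSpan, map_span]
  congr 1
  ext z
  simp only [mem_map, LinearMap.smul_apply, LinearMap.id_apply, Set.mem_ofPred_eq,
    Set.mem_image]
  constructor
  · rintro ⟨_, ⟨x, hx, rfl⟩, _, ⟨y, hy, rfl⟩, rfl⟩
    exact ⟨⁅x, y⁆, ⟨x, hx, y, hy, rfl⟩, by rw [smul_lie, lie_smul, smul_smul]⟩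
  · rintro ⟨_, ⟨x, hx, y, hy, rfl⟩, rfl⟩
    exact ⟨_, ⟨x, hx, rfl⟩, _, ⟨y, hy, rfl⟩, by rw [smul_lie, lie_smul, smul_smul]⟩

theorem map_mem_bracketSpan {M N : Submodule R L} (hM : ∀ x ∈ M, ∀ y ∈ M, ⁅x, y⁆ ∈ M)
    (φ : M →ₗ[R] L) (hφN : ∀ x, φ x ∈ N)
    (hφ : ∀ (x y : M) (h : ⁅(x : L), (y : L)⁆ ∈ M), φ ⟨⁅(x : L), (y : L)⁆, h⟩ = ⁅φ x, φ y⁆)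
    (x : M) (hx : (x : L) ∈ M.bracketSpan) : φ x ∈ N.bracketSpan := by
  have hle : M.bracketSpan ≤ (N.bracketSpan.comap φ).map M.subtype := by
    refine span_le.2 ?_
    rintro _ ⟨x, hx, y, hy, rfl⟩
    refine ⟨⟨_, hM x hx y hy⟩, ?_, rfl⟩
    rw [SetLike.mem_coe, mem_comap, hφ ⟨x, hx⟩ ⟨y, hy⟩]
    exact lie_mem_bracketSpan (hφN _) (hφN _)
  obtain ⟨x', hx', hxx'⟩ := hle hx
  rwa [Subtype.ext hxx'] at hx'

end Submodule

theorem LieAlgebra.exists_lie_ne_zero [StrongRankCondition R] [Nontrivial L]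
    (hJI : ∀ I : LieIdeal R L, I ≠ ⊥ →
      Module.finrank R I.toSubmodule = Module.finrank R L)
    (hdim : 2 ≤ Module.finrank R L) : ∃ x y : L, ⁅x, y⁆ ≠ 0 := by
  by_contra! hab
  obtain ⟨x₀, hx₀⟩ := exists_ne (0 : L)
  let J : LieIdeal R L :=
    { toSubmodule := R ∙ x₀
      lie_mem := fun {x z} _ => by rw [hab x z]; exact (R ∙ x₀).zero_mem }
  have hJ : J ≠ ⊥ := by
    intro h
    have hx : x₀ ∈ J := Submodule.mem_span_singleton_self x₀
    rw [h, LieSubmodule.mem_bot] at hx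
    exact hx₀ hx
  have hJrank : Module.finrank R J.toSubmodule ≤ 1 :=
    (finrank_span_le_card (R := R) {x₀}).trans (by simp)
  have := hJI J hJ
  omega

open Submodule in
theorem stmt_15_general (p : ℕ) [Fact (Nat.Prime p)]
    (L : Type) [LieRing L] [LieAlgebra ℤ_[p] L]
    [Module.Free ℤ_[p] L]
    -- `L` is just infinite:
    (hJI : Nontrivial L ∧ ∀ I : LieIdeal ℤ_[p] L, I ≠ ⊥ →
      Module.finrank ℤ_[p] I.toSubmodule = Module.finrank ℤ_[p] L)
    (hdim : 2 ≤ Module.finrank ℤ_[p] L)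
    (k : ℕ)
    -- every `ℤ_p`-submodule of index `p^k` has the same derived span as `L`:
    (hMM : ∀ M : Submodule ℤ_[p] L, M.toAddSubgroup.index = p ^ k →
      Submodule.span ℤ_[p] {z : L | ∃ x ∈ M, ∃ y ∈ M, z = ⁅x, y⁆} =
        Submodule.span ℤ_[p] {z : L | ∃ x y : L, z = ⁅x, y⁆}) :
    -- then `p^m · L` is not self-similar of index `p^k`, for every `m`:
    ∀ (m : ℕ) (L₀ : Submodule ℤ_[p] L),
      (L₀ : Set L) = {x : L | ∃ y : L, x = ((p : ℤ_[p]) ^ m) • y} →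
      ¬ ∃ (M : Submodule ℤ_[p] L) (φ : M →ₗ[ℤ_[p]] L),
        M ≤ L₀ ∧ (∀ x ∈ M, ∀ y ∈ M, ⁅x, y⁆ ∈ M) ∧
        AddSubgroup.relIndex M.toAddSubgroup L₀.toAddSubgroup = p ^ k ∧
        (∀ x : M, φ x ∈ L₀) ∧
        (∀ (x y : M) (h : ⁅(x : L), (y : L)⁆ ∈ M), φ ⟨⁅(x : L), (y : L)⁆, h⟩ = ⁅φ x, φ y⁆) ∧
        (∀ I : Submodule ℤ_[p] L, I ≤ L₀ → (∀ a ∈ L₀, ∀ b ∈ I, ⁅a, b⁆ ∈ I) → I ≠ ⊥ →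
          ¬ (I ≤ M ∧ ∀ x : M, (x : L) ∈ I → φ x ∈ I)) := by
  intro m L₀ hL₀ ⟨M, φ, hML, hMbr, hidx, hφL, hφbr, hsimple⟩
  obtain ⟨_, hJI⟩ := hJI
  obtain ⟨x₁, y₁, hxy⟩ := LieAlgebra.exists_lie_ne_zero hJI hdim
  set c : ℤ_[p] := (p : ℤ_[p]) ^ m
  have hc : c ≠ 0 := pow_ne_zero _ (by exact_mod_cast (Fact.out : p.Prime).ne_zero)
  set f : L →ₗ[ℤ_[p]] L := c • LinearMap.id
  have hL₀f : L₀ = (⊤ : Submodule ℤ_[p] L).map f :=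
    SetLike.coe_injective <| hL₀.trans <| by ext; simp [f, eq_comm]
  have hMf : M = (M.comap f).map f :=
    (map_comap_eq_of_le (hML.trans_eq (hL₀f.trans (LinearMap.range_eq_map f).symm))).symm
  have hidx' : (M.comap f).toAddSubgroup.index = p ^ k := by
    rw [← hidx, hL₀f, ← LinearMap.range_eq_map]
    exact AddSubgroup.index_comap M.toAddSubgroup f.toAddMonoidHom
  have hD : M.bracketSpan = L₀.bracketSpan := by
    rw [hMf, hL₀f, bracketSpan_map_smul, bracketSpan_map_smul, bracketSpan_top]
    exact congrArg _ (hMM _ hidx')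
  have hcL₀ (x : L) : c • x ∈ L₀ := hL₀f ▸ mem_map_of_mem (mem_top (x := x))
  have hD_ne : L₀.bracketSpan ≠ ⊥ := (Submodule.ne_bot_iff _).2
    ⟨_, lie_mem_bracketSpan (hcL₀ x₁) (hcL₀ y₁), by simpa [smul_lie, lie_smul, hc] using hxy⟩
  exact hsimple M.bracketSpan ((bracketSpan_le hMbr).trans hML)
    (fun a ha b hb => hD ▸ lie_mem_bracketSpan ha (hML (bracketSpan_le hMbr hb))) (hD ▸ hD_ne)
    ⟨bracketSpan_le hMbr, fun x hx => hD ▸ map_mem_bracketSpan hMbr φ hφL hφbr x hx⟩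

/-- Let `L` be a just-infinite `ℤ_p`-Lie lattice (nonzero, with every
nonzero ideal of finite additive index, i.e. of full rank) of dimension at least `2`, and
let `k ∈ ℕ`.  Assume that every `ℤ_p`-submodule `M` of `L` of additive index `p^k` satisfies
`[M,M] = [L,L]` (the `ℤ_p`-spans of the sets of brackets, i.e. the sets of finite sums of
brackets, coincide).  Then for every `m ∈ ℕ` the `ℤ_p`-Lie lattice `p^m · L` is not
self-similar of index `p^k`: it admits no simple virtual endomorphism of index `p^k`. -/
theorem stmt_15 (p : ℕ) [Fact (Nat.Prime p)]
    (L : Type) [LieRing L] [LieAlgebra ℤ_[p] L]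
    [Module.Free ℤ_[p] L] [Module.Finite ℤ_[p] L]
    -- `L` is just infinite:
    (hJI : Nontrivial L ∧ ∀ I : LieIdeal ℤ_[p] L, I ≠ ⊥ →
      Module.finrank ℤ_[p] I.toSubmodule = Module.finrank ℤ_[p] L)
    (hdim : 2 ≤ Module.finrank ℤ_[p] L)
    (k : ℕ)
    -- every `ℤ_p`-submodule of index `p^k` has the same derived span as `L`:
    (hMM : ∀ M : Submodule ℤ_[p] L, M.toAddSubgroup.index = p ^ k →
      Submodule.span ℤ_[p] {z : L | ∃ x ∈ M, ∃ y ∈ M, z = ⁅x, y⁆} =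
        Submodule.span ℤ_[p] {z : L | ∃ x y : L, z = ⁅x, y⁆}) :
    -- then `p^m · L` is not self-similar of index `p^k`, for every `m`:
    ∀ (m : ℕ) (L₀ : Submodule ℤ_[p] L),
      (L₀ : Set L) = {x : L | ∃ y : L, x = ((p : ℤ_[p]) ^ m) • y} →
      ¬ ∃ (M : Submodule ℤ_[p] L) (φ : M →ₗ[ℤ_[p]] L),
        M ≤ L₀ ∧ (∀ x ∈ M, ∀ y ∈ M, ⁅x, y⁆ ∈ M) ∧
        AddSubgroup.relIndex M.toAddSubgroup L₀.toAddSubgroup = p ^ k ∧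
        (∀ x : M, φ x ∈ L₀) ∧
        (∀ (x y : M) (h : ⁅(x : L), (y : L)⁆ ∈ M), φ ⟨⁅(x : L), (y : L)⁆, h⟩ = ⁅φ x, φ y⁆) ∧
        (∀ I : Submodule ℤ_[p] L, I ≤ L₀ → (∀ a ∈ L₀, ∀ b ∈ I, ⁅a, b⁆ ∈ I) → I ≠ ⊥ →
          ¬ (I ≤ M ∧ ∀ x : M, (x : L) ∈ I → φ x ∈ I)) :=
  stmt_15_general p L hJI hdim k hMM
end
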